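/- Let α_t be the equal-revenue sequence (α_0 = 0, α_{t+1} = α_t + (1/2)(√(4α_t² − 8α_t + 5) − 1)). Then for every t ≥ 1, (1 − α_t)³ < α_{t+1} − α_t < (1 − α_t)^{3/2}. -/
import Mathlib


noncomputable def alphaSeq : ℕ → ℝ
  | 0 => 0
  | t + 1 => alphaSeq t + (1/2) * (Real.sqrt (4 * (alphaSeq t)^2 - 8 * alphaSeq t + 5) - 1)

lemma alphaSeq_lt_one : ∀ t, alphaSeq t < 1 := by
  intro t
  induction t with
  | zero => norm_num [alphaSeq]
  | succ t ih =>
    have hnn : (0:ℝ) ≤ 4 * (alphaSeq t)^2 - 8 * alphaSeq t + 5 := by nlinarith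
    have h1 : Real.sqrt (4 * (alphaSeq t)^2 - 8 * alphaSeq t + 5) < 3 - 2 * alphaSeq t := by
      rw [show (3 - 2 * alphaSeq t) = Real.sqrt ((3 - 2*alphaSeq t)^2) by
        rw [Real.sqrt_sq (by linarith)]]
      apply Real.sqrt_lt_sqrt hnn
      nlinarith
    show alphaSeq t + (1/2) * (Real.sqrt (4 * (alphaSeq t)^2 - 8 * alphaSeq t + 5) - 1) < 1
    linarith

lemma alphaSeq_ge : ∀ t, 1 ≤ t → (Real.sqrt 5 - 1)/2 ≤ alphaSeq t := by
  intro t ht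
  induction t with
  | zero => omega
  | succ t ih =>
    have hinc : alphaSeq t ≤ alphaSeq (t+1) := by
      have hnn : (0:ℝ) ≤ 4 * (alphaSeq t)^2 - 8 * alphaSeq t + 5 := by
        nlinarith [sq_nonneg (alphaSeq t - 1)]
      have h1 : (1:ℝ) ≤ Real.sqrt (4 * (alphaSeq t)^2 - 8 * alphaSeq t + 5) := by
        rw [show (1:ℝ) = Real.sqrt 1 by simp]
        apply Real.sqrt_le_sqrt
        nlinarith [sq_nonneg (alphaSeq t - 1)]
      show alphaSeq t ≤ alphaSeq t + (1/2) * (Real.sqrt (4 * (alphaSeq t)^2 - 8 * alphaSeq t + 5) - 1)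
      linarith
    rcases Nat.eq_or_lt_of_le ht with h | h
    · have : alphaSeq 1 = (Real.sqrt 5 - 1)/2 := by
        show alphaSeq 0 + (1/2) * (Real.sqrt (4 * (alphaSeq 0)^2 - 8 * alphaSeq 0 + 5) - 1)
            = (Real.sqrt 5 - 1)/2
        norm_num [alphaSeq]
        ring
      rw [← h]
      simpa using this.ge
    · exact le_trans (ih (by omega)) hinc

theorem alphaSeq_increment_bounds (t : ℕ) (ht : 1 ≤ t) :
    (1 - alphaSeq t) ^ 3 < alphaSeq (t + 1) - alphaSeq t ∧
    alphaSeq (t + 1) - alphaSeq t < (1 - alphaSeq t) ^ ((3 : ℝ) / 2) := by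
  have ha1 : alphaSeq t < 1 := alphaSeq_lt_one t
  have ha2 : (Real.sqrt 5 - 1)/2 ≤ alphaSeq t := alphaSeq_ge t ht
  have h5 : (2:ℝ) < Real.sqrt 5 := by
    nlinarith [Real.sq_sqrt (by norm_num : (0:ℝ) ≤ 5), Real.sqrt_nonneg 5]
  set a := alphaSeq t with ha
  set b := 1 - a with hbdef
  have hb0 : 0 < b := by simp [hbdef]; linarith
  have hb2 : b < 1/2 := by simp [hbdef]; linarith
  have hrew : 4 * a^2 - 8 * a + 5 = 4 * b^2 + 1 := by
    simp [hbdef]; ring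
  have hinc : alphaSeq (t + 1) - a = (1/2) * (Real.sqrt (4 * b^2 + 1) - 1) := by
    show a + (1/2) * (Real.sqrt (4 * a^2 - 8 * a + 5) - 1) - a
        = (1/2) * (Real.sqrt (4 * b^2 + 1) - 1)
    rw [hrew]; ring
  rw [hinc]
  clear_value b a
  constructor
  · -- lower bound: 2b^3 + 1 < sqrt(4b^2+1)
    have key : 2 * b^3 + 1 < Real.sqrt (4 * b^2 + 1) := by
      rw [show (2 * b^3 + 1 : ℝ) = Real.sqrt ((2*b^3+1)^2) by
        rw [Real.sqrt_sq (by positivity)]]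
      apply Real.sqrt_lt_sqrt (by positivity)
      have hb2' : b^2 < 1/4 := by nlinarith
      have h3 : b^3 < b^2 / 2 := by nlinarith [mul_lt_mul_of_pos_right hb2 (pow_pos hb0 2)]
      have h4 : b^4 < 1/16 := by nlinarith
      have h6 : b^6 < b^2/16 := by
        nlinarith [mul_lt_mul_of_pos_right h4 (pow_pos hb0 2)]
      have expand : (2*b^3+1)^2 = 4*b^6 + 4*b^3 + 1 := by ring
      rw [expand]
      linarith [pow_pos hb0 2]
    nlinarith [key]
  · -- upper bound
    set s := Real.sqrt b with hsdef
    have hs0 : 0 < s := Real.sqrt_pos.mpr hb0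
    have hs2 : s^2 = b := Real.sq_sqrt hb0.le
    have hs1 : s < 1 := by nlinarith
    have hrpow : b ^ ((3:ℝ)/2) = s^3 := by
      rw [show ((3:ℝ)/2) = (3:ℕ) * ((1:ℝ)/2) by norm_num,
        Real.rpow_natCast_mul hb0.le, ← Real.sqrt_eq_rpow,
        show b^(3:ℕ) = (s^3)^2 by rw [← hs2]; ring, Real.sqrt_sq (by positivity)]
    rw [hrpow]
    have key : Real.sqrt (4 * b^2 + 1) < 2 * s^3 + 1 := by
      rw [show (2 * s^3 + 1 : ℝ) = Real.sqrt ((2*s^3+1)^2) by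
        rw [Real.sqrt_sq (by positivity)]]
      apply Real.sqrt_lt_sqrt (by positivity)
      have : b^2 = s^4 := by rw [← hs2]; ring
      nlinarith [pow_pos hs0 3, pow_pos hs0 4, pow_pos hs0 6]
    nlinarith [key]
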